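/- arXiv:math-ph/0007005 — 3 statements merged into one kernel-verified Lean document; each statement's English description precedes it below -/
import Mathlib

section
/- The map U : δ_{[s,c]} ↦ Σ_{σ∈Sym(n)} δ_{F[σ](s)} ⊗ e_{c∘σ⁻¹} extends to a unitary equivalence between ℓ²(F(J), γ_{F,J}) and the symmetric Hilbert space Γ_F(K), where γ_{F,J}([s,c]) = |H_{(s,c)}| is the weight on orbits of colored structures. -/
open scoped BigOperators

/-- The map `U : δ_{[s,c]} ↦ Σ_{σ ∈ Sym(n)} δ_{F[σ](s)} ⊗ e_{c∘σ⁻¹}` extends to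
a unitary equivalence between `ℓ²(F(J), γ_{F,J})` (functions on the set `Q` of orbits of
`J`-colored `F`-structures, with weight `γ_{F,J}([s,c]) = |H_{(s,c)}|`, the order of the
joint stabilizer) and the level-`n` part of the symmetric Hilbert space `Γ_F(K)` (the
`Sym(n)`-invariant functions `F[n] → K^{⊗n}`, with inner product scaled by `1/n!`).
Concretely: there is a weight `stab : Q → ℕ` equal on each orbit to the order of the joint
stabilizer, such that the linear map `T φ (x) = stab[x] · φ[x]` (whose value on `δ_q` is
exactly the symmetrized vector above) takes values in the invariant functions, is injective,
surjects onto the invariant functions, and carries the weighted `ℓ²` inner product to the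
`1/n!`-scaled inner product. -/
theorem symmetric_space_unitary_equiv
    (n : ℕ) (S J : Type) [Fintype S] [DecidableEq S] [DecidableEq J]
    (ρ : Equiv.Perm (Fin n) → S → S)
    (hone : ∀ s, ρ 1 s = s)
    (hmul : ∀ σ τ s, ρ (σ * τ) s = ρ σ (ρ τ s)) :
    ∀ (act : Equiv.Perm (Fin n) → S × (Fin n → J) → S × (Fin n → J)),
      act = (fun σ x => (ρ σ x.1, x.2 ∘ ⇑σ⁻¹)) →
    ∀ (r : S × (Fin n → J) → S × (Fin n → J) → Prop),
      r = (fun x y => ∃ σ, act σ x = y) →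
    ∃ stab : Quot r → ℕ,
      (∀ x, stab (Quot.mk r x) = Nat.card {σ : Equiv.Perm (Fin n) // act σ x = x}) ∧
      ∀ T : (Quot r → ℂ) → (S × (Fin n → J) → ℂ),
        T = (fun φ x => (stab (Quot.mk r x) : ℂ) * φ (Quot.mk r x)) →
        (∀ (φ : Quot r → ℂ) (σ : Equiv.Perm (Fin n)) x, T φ (act σ x) = T φ x) ∧
        Function.Injective T ∧
        (∀ ψ : S × (Fin n → J) → ℂ, (∀ σ x, ψ (act σ x) = ψ x) →
          (Function.support ψ).Finite → ∃ φ : Quot r → ℂ, T φ = ψ) ∧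
        (∀ φ₁ φ₂ : Quot r → ℂ,
          (Function.support φ₁).Finite → (Function.support φ₂).Finite →
          (1 / (n.factorial : ℂ)) *
              ∑ᶠ x : S × (Fin n → J), (starRingEnd ℂ) (T φ₁ x) * T φ₂ x =
            ∑ᶠ q : Quot r, (stab q : ℂ) * (starRingEnd ℂ) (φ₁ q) * φ₂ q) := by
  classical
  intro act hact r hr
  -- basic group action facts
  have act_one : ∀ x, act 1 x = x := by
    intro x
    subst hact
    simp [hone]
  have act_mul : ∀ σ τ x, act (σ * τ) x = act σ (act τ x) := by
    intro σ τ x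
    subst hact
    refine Prod.ext (hmul σ τ x.1) ?_
    show x.2 ∘ ⇑(σ * τ)⁻¹ = (x.2 ∘ ⇑τ⁻¹) ∘ ⇑σ⁻¹
    rw [mul_inv_rev, Equiv.Perm.coe_mul]
    rfl
  have act_inv : ∀ σ x, act σ⁻¹ (act σ x) = x := by
    intro σ x
    rw [← act_mul, inv_mul_cancel, act_one]
  -- r is an equivalence relation
  have hrequiv : Equivalence r := by
    constructor
    · intro x; rw [hr]; exact ⟨1, act_one x⟩
    · rintro x y h
      rw [hr] at h ⊢
      obtain ⟨σ, hσ⟩ := h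
      exact ⟨σ⁻¹, by rw [← hσ, act_inv]⟩
    · rintro x y z h h'
      rw [hr] at h h' ⊢
      obtain ⟨σ, hσ⟩ := h
      obtain ⟨τ, hτ⟩ := h'
      exact ⟨τ * σ, by rw [act_mul, hσ, hτ]⟩
  have r_iff : ∀ a b, r a b ↔ ∃ σ, act σ a = b := by
    intro a b; rw [hr]
  have mk_eq : ∀ a b, Quot.mk r a = Quot.mk r b ↔ r a b := by
    intro a b
    rw [Quot.eq, Equivalence.eqvGen_iff hrequiv]
  have r_out : ∀ x : S × (Fin n → J), r x (Quot.mk r x).out := by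
    intro x
    rw [← mk_eq, Quot.out_eq]
  -- stabilizer cardinality is constant on orbits
  have stab_congr : ∀ x y, r x y →
      Nat.card {σ : Equiv.Perm (Fin n) // act σ x = x}
        = Nat.card {σ : Equiv.Perm (Fin n) // act σ y = y} := by
    intro x y hxy
    rw [hr] at hxy
    obtain ⟨τ, hτ⟩ := hxy
    have hx : act τ⁻¹ y = x := by rw [← hτ, act_inv]
    refine Nat.card_congr ⟨fun ⟨σ, h⟩ => ⟨τ * σ * τ⁻¹, ?_⟩,
      fun ⟨σ, h⟩ => ⟨τ⁻¹ * σ * τ, ?_⟩, ?_, ?_⟩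
    · rw [act_mul, act_mul, hx, h, hτ]
    · rw [act_mul, act_mul, hτ, h, hx]
    · rintro ⟨σ, h⟩; ext; simp
    · rintro ⟨σ, h⟩; ext; simp
  refine ⟨fun q => Nat.card {σ : Equiv.Perm (Fin n) // act σ q.out = q.out},
    fun x => (stab_congr _ _ (r_out x)).symm, ?_⟩
  set stab : Quot r → ℕ :=
    fun q => Nat.card {σ : Equiv.Perm (Fin n) // act σ q.out = q.out} with hstab
  have stab_eq : ∀ x, stab (Quot.mk r x)
      = Nat.card {σ : Equiv.Perm (Fin n) // act σ x = x} :=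
    fun x => (stab_congr _ _ (r_out x)).symm
  have stab_pos : ∀ q, 0 < stab q := by
    intro q
    have : Nonempty {σ : Equiv.Perm (Fin n) // act σ q.out = q.out} :=
      ⟨⟨1, act_one _⟩⟩
    exact Nat.card_pos
  have stab_ne : ∀ q, (stab q : ℂ) ≠ 0 := by
    intro q
    exact_mod_cast (stab_pos q).ne'
  intro T hT
  have mk_act : ∀ σ x, Quot.mk r (act σ x) = Quot.mk r x := by
    intro σ x
    exact ((mk_eq _ _).mpr (hrequiv.symm (by rw [hr]; exact ⟨σ, rfl⟩)))
  -- orbit finsets and orbit-stabilizer counting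
  have orb_count : ∀ x0 : S × (Fin n → J),
      (Finset.image (fun σ => act σ x0) Finset.univ).card
        * Nat.card {σ : Equiv.Perm (Fin n) // act σ x0 = x0} = n.factorial := by
    intro x0
    have hcard : (Finset.univ : Finset (Equiv.Perm (Fin n))).card
        = ∑ y ∈ Finset.image (fun σ => act σ x0) Finset.univ,
            (Finset.univ.filter (fun σ => act σ x0 = y)).card :=
      Finset.card_eq_sum_card_fiberwise (fun σ _ => Finset.mem_image_of_mem _ (Finset.mem_univ σ))
    have hfiber : ∀ y ∈ Finset.image (fun σ => act σ x0) Finset.univ,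
        (Finset.univ.filter (fun σ => act σ x0 = y)).card
          = Nat.card {σ : Equiv.Perm (Fin n) // act σ x0 = x0} := by
      intro y hy
      obtain ⟨τ, _, hτ⟩ := Finset.mem_image.mp hy
      rw [Nat.card_eq_fintype_card, Fintype.card_subtype]
      refine Finset.card_bij (fun σ _ => τ⁻¹ * σ) ?_ ?_ ?_
      · intro σ hσ
        simp only [Finset.mem_filter, Finset.mem_univ, true_and] at hσ ⊢
        rw [act_mul, hσ, ← hτ, act_inv]
      · intro a ha b hb h
        exact mul_left_cancel h
      · intro σ hσ
        simp only [Finset.mem_filter, Finset.mem_univ, true_and] at hσ ⊢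
        exact ⟨τ * σ, by rw [act_mul, hσ, hτ], by group⟩
    rw [Finset.sum_congr rfl hfiber, Finset.sum_const, smul_eq_mul] at hcard
    rw [← hcard, Finset.card_univ, Fintype.card_perm, Fintype.card_fin]
  refine ⟨?_, ?_, ?_, ?_⟩
  · -- invariance
    intro φ σ x
    rw [hT]
    simp only [mk_act]
  · -- injectivity
    intro φ₁ φ₂ h
    rw [hT] at h
    funext q
    have := congrFun h q.out
    simp only [Quot.out_eq] at this
    exact mul_left_cancel₀ (stab_ne q) this
  · -- surjectivity onto invariant functions
    intro ψ hψ _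
    have ψ_const : ∀ x y, r x y → ψ x = ψ y := by
      intro x y hxy
      rw [hr] at hxy
      obtain ⟨σ, hσ⟩ := hxy
      rw [← hσ, hψ]
    refine ⟨fun q => ψ q.out / (stab q : ℂ), ?_⟩
    funext x
    rw [hT]
    simp only
    rw [mul_comm, div_mul_cancel₀ _ (stab_ne _), ← ψ_const _ _ (r_out x)]
  · -- inner product
    intro φ₁ φ₂ h1 h2
    have factpos : ((n.factorial : ℂ)) ≠ 0 := by
      exact_mod_cast n.factorial_ne_zero
    set A : Finset (Quot r) := h1.toFinset ∩ h2.toFinset with hA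
    have mem_orbF : ∀ (q : Quot r) (x),
        x ∈ Finset.image (fun σ => act σ q.out) Finset.univ ↔ Quot.mk r x = q := by
      intro q x
      simp only [Finset.mem_image, Finset.mem_univ, true_and]
      constructor
      · rintro ⟨σ, rfl⟩; rw [mk_act, Quot.out_eq]
      · rintro rfl
        exact (r_iff _ _).mp (hrequiv.symm (r_out x))
    set B : Finset (S × (Fin n → J)) :=
      A.biUnion (fun q => Finset.image (fun σ => act σ q.out) Finset.univ) with hB
    have hTsupp : Function.support
        (fun x => (starRingEnd ℂ) (T φ₁ x) * T φ₂ x) ⊆ ↑B := by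
      intro x hx
      simp only [Function.mem_support] at hx
      have hx1 : T φ₁ x ≠ 0 := fun h => hx (by simp [h])
      have hx2 : T φ₂ x ≠ 0 := fun h => hx (by simp [h])
      rw [hT] at hx1 hx2
      simp only [ne_eq, mul_eq_zero, not_or] at hx1 hx2
      refine Finset.mem_coe.mpr (Finset.mem_biUnion.mpr
        ⟨Quot.mk r x, ?_, (mem_orbF _ x).mpr rfl⟩)
      simp only [hA, Finset.mem_inter, Set.Finite.mem_toFinset, Function.mem_support]
      exact ⟨hx1.2, hx2.2⟩
    have hmaps : ∀ x ∈ B, Quot.mk r x ∈ A := by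
      intro x hx
      obtain ⟨q, hq, hxq⟩ := Finset.mem_biUnion.mp hx
      rw [(mem_orbF q x).mp hxq]
      exact hq
    have hsuppA : Function.support
        (fun q => (stab q : ℂ) * (starRingEnd ℂ) (φ₁ q) * φ₂ q) ⊆ ↑A := by
      intro q hq
      simp only [Function.mem_support, ne_eq, mul_eq_zero, not_or, map_eq_zero] at hq
      simp only [hA, Finset.mem_coe, Finset.mem_inter, Set.Finite.mem_toFinset,
        Function.mem_support]
      exact ⟨hq.1.2, hq.2⟩
    rw [finsum_eq_sum_of_support_subset _ hTsupp,
      finsum_eq_sum_of_support_subset _ hsuppA,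
      ← Finset.sum_fiberwise_of_maps_to hmaps
        (fun x => (starRingEnd ℂ) (T φ₁ x) * T φ₂ x)]
    have hfilter : ∀ q ∈ A, B.filter (fun x => Quot.mk r x = q)
        = Finset.image (fun σ => act σ q.out) Finset.univ := by
      intro q hq
      ext x
      simp only [Finset.mem_filter]
      constructor
      · rintro ⟨-, h⟩; exact (mem_orbF q x).mpr h
      · intro h
        exact ⟨Finset.mem_biUnion.mpr ⟨q, hq, h⟩, (mem_orbF q x).mp h⟩
    have hinner : ∀ q ∈ A,
        ∑ x ∈ B.filter (fun x => Quot.mk r x = q),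
          (starRingEnd ℂ) (T φ₁ x) * T φ₂ x
        = (n.factorial : ℂ) * ((stab q : ℂ) * (starRingEnd ℂ) (φ₁ q) * φ₂ q) := by
      intro q hq
      rw [hfilter q hq]
      have hval : ∀ x ∈ Finset.image (fun σ => act σ q.out) Finset.univ,
          (starRingEnd ℂ) (T φ₁ x) * T φ₂ x
            = (stab q : ℂ) * ((stab q : ℂ) * ((starRingEnd ℂ) (φ₁ q) * φ₂ q)) := by
        intro x hx
        have hmk : Quot.mk r x = q := (mem_orbF q x).mp hx
        rw [hT]
        simp only [hmk, map_mul, map_natCast]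
        ring
      rw [Finset.sum_congr rfl hval, Finset.sum_const, nsmul_eq_mul]
      have hcard : ((Finset.image (fun σ => act σ q.out) Finset.univ).card : ℂ)
          * (stab q : ℂ) = (n.factorial : ℂ) := by
        exact_mod_cast congrArg (fun m : ℕ => (m : ℂ)) (orb_count q.out)
      rw [← hcard]
      ring
    rw [Finset.sum_congr rfl hinner, ← Finset.mul_sum, ← mul_assoc, one_div,
      inv_mul_cancel₀ factpos, one_mul]
end

section
/- On the combinatorial Fock space of the species L of linear orderings with weight ω_L(f,g) = δ_{f, g|_U} (g restricted to U equals f), the operators satisfy a(h₁)a*(h₂) = ⟨h₁,h₂⟩·1; i.e. one obtains the free (full Fock space) relations. -/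
/-!
The weight `ω_L(f, ·)` is the indicator of the single ordering `f̂` of `{0,…,n}` that extends
`f` by putting the new point last, so `a(e_{j₁})` just evaluates its argument at `f̂` with last
colour `j₁`. In the symmetrized creation operator evaluated at `f̂` only the trivial
transposition `τ_{n,n}` survives, because every other `τ_{n,k}` moves the last point, and that
term is `δ_{j₁ j₂} φ(f)`.
-/

open scoped BigOperators

noncomputable section

/-- Vectors of the (unsymmetrized) combinatorial Fock space of a species with level sets
`F n`, over a one-particle space with orthonormal basis indexed by `J`: a level-`n`
component assigns to each structure `f ∈ F[n]` a tensor `K^{⊗n}`, represented by its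
coefficients on basis tensors, i.e. a function of colorings `c : Fin n → J`. -/
def CVec (F : ℕ → Type) (J : Type) : Type := ∀ n, F n → (Fin n → J) → ℂ

/-- Membership in the symmetric Hilbert space `Γ_F(K)`: `φ(F[σ] f) = U(σ) φ(f)`. -/
def IsSymmVec {F : ℕ → Type} {J : Type}
    (ρ : ∀ n, Equiv.Perm (Fin n) → F n → F n) (φ : CVec F J) : Prop :=
  ∀ (n : ℕ) (σ : Equiv.Perm (Fin n)) (f : F n) (c : Fin n → J),
    φ n (ρ n σ f) c = φ n f (c ∘ ⇑σ)

/-- The annihilation operator `a(e_j)` of the combinatorial Fock space with weight `ω`: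
`(a(h)φ)(f) = Σ_{g ∈ F[n+1]} ω(f,g) · inp_n(h, φ(g))`. -/
def ann {F : ℕ → Type} [∀ n, Fintype (F n)] {J : Type}
    (ω : ∀ n, F n → F (n + 1) → ℂ) (j : J) (φ : CVec F J) : CVec F J :=
  fun n f c => ∑ g : F (n + 1), ω n f g * φ (n + 1) g (Fin.snoc c j)

/-- The symmetrized creation operator `a*(e_j)` of the combinatorial Fock space with weight
`ω`: `(a*(h)φ)(f) = Σ_{k=0}^{n} Σ_g conj ω(g, F[τ_{n,k}] f) · U(τ_{n,k})(φ(g) ⊗ h)` for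
`f ∈ F[n+1]`, where `τ_{n,k}` is the transposition of `n` and `k`. -/
def cre {F : ℕ → Type} [∀ n, Fintype (F n)] {J : Type} [DecidableEq J]
    (ρ : ∀ n, Equiv.Perm (Fin n) → F n → F n)
    (ω : ∀ n, F n → F (n + 1) → ℂ) (j : J) (φ : CVec F J) : CVec F J
  | 0 => fun _ _ => 0
  | (m + 1) => fun f c =>
      ∑ k : Fin (m + 1), ∑ g : F m,
        (starRingEnd ℂ) (ω m g (ρ (m + 1) (Equiv.swap (Fin.last m) k) f)) *
          (if c k = j then
            φ m g (fun i => c (Equiv.swap (Fin.last m) k i.castSucc)) else 0)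

end

noncomputable section

/-- Level `n` of the species `L` of linear orderings: bijections `{0,…,n-1} ≃ {0,…,n-1}`
(orderings of the set `n`). -/
abbrev LOrd (n : ℕ) : Type := Fin n ≃ Fin n

/-- Transport of linear orderings: `L[σ](f) = σ ∘ f`. -/
def rhoL : ∀ n, Equiv.Perm (Fin n) → LOrd n → LOrd n := fun _ σ f => f.trans σ

/-- The weight of the species of linear orderings: `ω_L(f,g) = δ_{f, g|U}`, i.e. `1` iff
the ordering `g` of `{0,…,n}` extends the ordering `f` of `{0,…,n-1}` (so `g` places the
new point `*` last). -/
def omegaL : ∀ n, LOrd n → LOrd (n + 1) → ℂ := fun n f g =>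
  if ∀ i : Fin n, g i.castSucc = Fin.castSucc (f i) then 1 else 0

namespace LOrd

def extendLast {n : ℕ} (f : LOrd n) : LOrd (n + 1) :=
  finSuccEquivLast.trans (f.optionCongr.trans finSuccEquivLast.symm)

variable {n : ℕ}

@[simp]
theorem extendLast_castSucc (f : LOrd n) (i : Fin n) :
    f.extendLast i.castSucc = (f i).castSucc := by
  simp [extendLast, finSuccEquivLast_castSucc, finSuccEquivLast_symm_some]

@[simp]
theorem extendLast_last (f : LOrd n) : f.extendLast (Fin.last n) = Fin.last n := by
  simp [extendLast, finSuccEquivLast_last]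

theorem extendLast_injective : Function.Injective (extendLast (n := n)) := by
  intro f g hfg
  ext i : 1
  simpa using congrArg (fun e : LOrd (n + 1) => e i.castSucc) hfg

/-- An ordering of `{0,…,n}` extending `f` must fix the new point, since the old points
already fill `{0,…,n-1}`; hence `f.extendLast` is the only one. -/
theorem eq_extendLast_iff (f : LOrd n) (g : LOrd (n + 1)) :
    g = f.extendLast ↔ ∀ i : Fin n, g i.castSucc = (f i).castSucc := by
  refine ⟨fun h i => h ▸ extendLast_castSucc f i, fun hg => ?_⟩
  have hlast : g (Fin.last n) = Fin.last n := by
    rcases Fin.eq_castSucc_or_eq_last (g (Fin.last n)) with ⟨m, hm⟩ | h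
    · have := hg (f.symm m)
      rw [Equiv.apply_symm_apply, ← hm] at this
      exact absurd (g.injective this) (Fin.castSucc_lt_last _).ne
    · exact h
  ext i
  induction i using Fin.lastCases with
  | last => simp [hlast]
  | cast i => simp [hg i]

end LOrd

theorem omegaL_eq_ite {n : ℕ} (f : LOrd n) (g : LOrd (n + 1)) :
    omegaL n f g = if g = f.extendLast then 1 else 0 := by
  simp only [omegaL, LOrd.eq_extendLast_iff]

theorem ann_omegaL {J : Type} (j : J) (ψ : CVec LOrd J) (n : ℕ) (f : LOrd n)
    (c : Fin n → J) :
    ann omegaL j ψ n f c = ψ (n + 1) f.extendLast (Fin.snoc c j) := by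
  simp [ann, omegaL_eq_ite]

theorem cre_omegaL_extendLast {J : Type} [DecidableEq J] (j : J) (φ : CVec LOrd J)
    (n : ℕ) (f : LOrd n) (c : Fin (n + 1) → J) :
    cre rhoL omegaL j φ (n + 1) f.extendLast c
      = if c (Fin.last n) = j then φ n f (fun i => c i.castSucc) else 0 := by
  simp only [cre]
  rw [Finset.sum_eq_single (Fin.last n)]
  · simp [rhoL, omegaL_eq_ite, LOrd.extendLast_injective.eq_iff, Finset.sum_ite_eq]
  · intro k _ hk
    refine Finset.sum_eq_zero fun h _ => ?_
    have hne : rhoL (n + 1) (Equiv.swap (Fin.last n) k) f.extendLast ≠ h.extendLast :=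
      fun heq => hk (by simpa [rhoL] using congrArg (· (Fin.last n)) heq)
    simp [omegaL_eq_ite, hne]
  · simp

theorem free_relations_linear_orders_general {J : Type} [DecidableEq J]
    (φ : CVec LOrd J) (j₁ j₂ : J)
    (n : ℕ) (f : LOrd n) (c : Fin n → J) :
    ann omegaL j₁ (cre rhoL omegaL j₂ φ) n f c
      = (if j₁ = j₂ then (1 : ℂ) else 0) * φ n f c := by
  rw [ann_omegaL, cre_omegaL_extendLast]
  simp

/-- On the combinatorial Fock space of the species `L` of linear orderings
with weight `ω_L(f,g) = δ_{f, g|U}` (i.e. the full Fock space `Γ_L(K)`), the operators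
satisfy `a(h₁)a*(h₂) = ⟨h₁,h₂⟩·1`: the free (full Fock space) relations (stated on basis
vectors `h₁ = e_{j₁}`, `h₂ = e_{j₂}`, so `⟨h₁,h₂⟩ = δ_{j₁ j₂}`). -/
theorem free_relations_linear_orders {J : Type} [DecidableEq J]
    (φ : CVec LOrd J) (hφ : IsSymmVec rhoL φ) (j₁ j₂ : J)
    (n : ℕ) (f : LOrd n) (c : Fin n → J) :
    ann omegaL j₁ (cre rhoL omegaL j₂ φ) n f c
      = (if j₁ = j₂ then (1 : ℂ) else 0) * φ n f c :=
  free_relations_linear_orders_general φ j₁ j₂ n f c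

end
end

section
/- On the combinatorial Fock space (D, ω^{D,q}) of simple directed graphs with the q-weight, the q-commutation relations hold: a(h₁)a*(h₂) − q·a*(h₂)a(h₁) = ⟨h₁,h₂⟩·1 for 0 ≤ q ≤ 1. -/
open scoped BigOperators

noncomputable section

/-- Level `n` of the species `D` of simple directed graphs: directed graphs on `{0,…,n-1}`
in which any pair of vertices is connected by at most one edge. -/
abbrev DGraph (n : ℕ) : Type :=
  {g : Fin n → Fin n → Bool // ∀ u v : Fin n, g u v = true → g v u = false}

/-- Transport of directed graphs: `D[σ](g) = (σ × σ)(g)`. -/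
def rhoD : ∀ n, Equiv.Perm (Fin n) → DGraph n → DGraph n := fun _ σ g =>
  ⟨fun u v => g.1 (σ.symm u) (σ.symm v), fun u v h => g.2 _ _ h⟩

/-- The number of edges of `g ∈ D[n+1]` going out of the new vertex `* = Fin.last n`. -/
def outDeg {n : ℕ} (g : DGraph (n + 1)) : ℕ :=
  (Finset.univ.filter fun v : Fin n => g.1 (Fin.last n) v.castSucc = true).card

/-- The `q`-weight on the species of simple directed graphs: `ω^{D,q}(g₁,g₂)` is
`(q^{n-|v_*(g₂)|}(1-q)^{|v_*(g₂)|})^{1/2}` if `g₂` consists of `g₁` together with edges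
going out of the new vertex `*`, and `0` otherwise. -/
def omegaD (q : ℝ) : ∀ n, DGraph n → DGraph (n + 1) → ℂ := fun n f g =>
  if (∀ u v : Fin n, g.1 u.castSucc v.castSucc = f.1 u v) ∧
      (∀ u : Fin n, g.1 u.castSucc (Fin.last n) = false)
  then ((Real.sqrt (q ^ (n - outDeg g) * (1 - q) ^ outDeg g) : ℝ) : ℂ)
  else 0

/-!
Expanding `a(e_{j₁}) a*(e_{j₂})` over the position `k` at which `a*` inserts the new point, the
term `k = n` is `δ_{j₁j₂}` times the kernel `(ω·ω̄)_n`, and each term `k < n` is the corresponding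
term of `a*(e_{j₂}) a(e_{j₁})` with the kernel `(ω̄·ω)_k` replaced by `(ω·ω̄)_k`. So the
`q`-commutation relations hold for any weight with `(ω·ω̄)_n = id` and `(ω·ω̄)_k = q·(ω̄·ω)_k`.

For the `q`-weight on digraphs, `(ω·ω̄)_n(f,f) = Σ_{v ⊆ n} q^{n-|v|}(1-q)^{|v|} = 1`. Both sides of
`(ω·ω̄)_k(f,h) = q·(ω̄·ω)_k(f,h)` vanish unless `k` is a source of `f` and `h` and the two agree
away from `k`; then each side has exactly one nonzero term, built from the out-degrees of `k`, and
the weights on the left live on one more vertex, which costs a factor `√q` each.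
-/

open Finset Function Equiv

lemma Fin.snoc_apply_swap_last_castSucc {J : Type} {n : ℕ} (c : Fin n → J) (j : J) (k : Fin n) :
    (fun i : Fin n => (Fin.snoc c j : Fin (n + 1) → J) (swap (Fin.last n) k.castSucc i.castSucc))
      = update c k j := by
  funext i
  by_cases hik : i = k
  · subst hik
    rw [swap_apply_right, Fin.snoc_last, update_self]
  · rw [swap_apply_of_ne_of_ne (Fin.castSucc_lt_last i).ne (by simpa using hik),
      Fin.snoc_castSucc, update_of_ne hik]

lemma Fin.swap_last_castSucc_ne {m : ℕ} (k : Fin (m + 1)) (u : Fin m) :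
    swap (Fin.last m) k u.castSucc ≠ k := by
  rw [Ne, swap_apply_eq_iff, swap_apply_right]
  exact (Fin.castSucc_lt_last u).ne

lemma Fin.snoc_swap_last_castSucc_eq_update_comp {J : Type} {m : ℕ} (c : Fin (m + 1) → J) (j : J)
    (k : Fin (m + 1)) :
    (Fin.snoc (fun i : Fin m => c (swap (Fin.last m) k i.castSucc)) j : Fin (m + 1) → J)
      = update c k j ∘ swap (Fin.last m) k := by
  funext x
  induction x using Fin.lastCases with
  | last => simp
  | cast i => simp [update_of_ne (Fin.swap_last_castSucc_ne k i)]

lemma Fin.exists_swap_last_castSucc_eq {m : ℕ} {k x : Fin (m + 1)} (hx : x ≠ k) :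
    ∃ u : Fin m, swap (Fin.last m) k u.castSucc = x := by
  have hlast : swap (Fin.last m) k x ≠ Fin.last m := by
    rwa [Ne, swap_apply_eq_iff, swap_apply_left]
  exact ⟨_, by rw [Fin.castSucc_castPred _ hlast, swap_apply_self]⟩

lemma Fin.forall_swap_last_castSucc_iff {m : ℕ} {k : Fin (m + 1)} {P : Fin (m + 1) → Prop} :
    (∀ u : Fin m, P (swap (Fin.last m) k u.castSucc)) ↔ ∀ x ≠ k, P x := by
  refine ⟨fun h x hx => ?_, fun h u => h _ (Fin.swap_last_castSucc_ne k u)⟩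
  obtain ⟨u, rfl⟩ := Fin.exists_swap_last_castSucc_eq hx
  exact h u

lemma Fin.card_filter_swap_last_castSucc {m : ℕ} {k : Fin (m + 1)} {P : Fin (m + 1) → Prop}
    [DecidablePred P] (hk : ¬ P k) :
    #{u : Fin m | P (swap (Fin.last m) k u.castSucc)} = #{x | P x} := by
  refine card_bij (fun u _ => swap (Fin.last m) k u.castSucc) (by simp) ?_ ?_
  · intro u _ v _ huv
    simpa using huv
  · intro x hx
    have hxk : x ≠ k := by rintro rfl; exact hk (by simpa using hx)
    obtain ⟨u, rfl⟩ := Fin.exists_swap_last_castSucc_eq hxk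
    exact ⟨u, by simpa using hx, rfl⟩

lemma Fin.swap_last_castSucc_apply_castSucc {m : ℕ} (k u : Fin (m + 1)) :
    swap (Fin.last (m + 1)) k.castSucc u.castSucc
      = if u = k then Fin.last (m + 1) else u.castSucc := by
  split_ifs with h
  · rw [h, swap_apply_right]
  · exact swap_apply_of_ne_of_ne (Fin.castSucc_lt_last u).ne (by simpa using h)

section FockSpace

variable {F : ℕ → Type} [∀ n, Fintype (F n)] {J : Type} [DecidableEq J]
  {ρ : ∀ n, Equiv.Perm (Fin n) → F n → F n} {ω : ∀ n, F n → F (n + 1) → ℂ}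

lemma ann_cre_apply (φ : CVec F J) (j₁ j₂ : J) (n : ℕ) (f : F n) (c : Fin n → J) :
    ann ω j₁ (cre ρ ω j₂ φ) n f c =
      ∑ k : Fin (n + 1), if (Fin.snoc c j₁ : Fin (n + 1) → J) k = j₂ then
        ∑ h : F n, (∑ g, ω n f g * starRingEnd ℂ (ω n h (ρ (n + 1) (swap (Fin.last n) k) g))) *
          φ n h (fun i => (Fin.snoc c j₁ : Fin (n + 1) → J) (swap (Fin.last n) k i.castSucc))
      else 0 := by
  simp only [ann, cre, mul_sum]
  rw [sum_comm]
  refine sum_congr rfl fun k _ => ?_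
  split_ifs
  · simp only [sum_mul]
    rw [sum_comm]
    exact sum_congr rfl fun _ _ => sum_congr rfl fun _ _ => by ring
  · simp

lemma cre_ann_apply (hρ_one : ∀ n g, ρ n 1 g = g)
    (hρ_mul : ∀ n σ τ g, ρ n (σ * τ) g = ρ n σ (ρ n τ g))
    {φ : CVec F J} (hφ : IsSymmVec ρ φ) (j₁ j₂ : J) (m : ℕ) (f : F (m + 1))
    (c : Fin (m + 1) → J) :
    cre ρ ω j₂ (ann ω j₁ φ) (m + 1) f c =
      ∑ k : Fin (m + 1), if c k = j₂ then
        ∑ h : F (m + 1), (∑ p, starRingEnd ℂ (ω m p (ρ (m + 1) (swap (Fin.last m) k) f)) *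
          ω m p (ρ (m + 1) (swap (Fin.last m) k) h)) * φ (m + 1) h (update c k j₁)
      else 0 := by
  refine sum_congr rfl fun k _ => ?_
  have hinv : Involutive (ρ (m + 1) (swap (Fin.last m) k)) := fun h => by
    rw [← hρ_mul, swap_mul_self, hρ_one]
  have hreindex : ∀ p, ∑ h, ω m p h * φ (m + 1) h (update c k j₁ ∘ swap (Fin.last m) k)
      = ∑ h, ω m p (ρ (m + 1) (swap (Fin.last m) k) h) * φ (m + 1) h (update c k j₁) := by
    intro p
    rw [← Equiv.sum_comp (hinv.toPerm _)]
    refine sum_congr rfl fun h _ => ?_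
    rw [Involutive.coe_toPerm, ← hφ, hinv]
  split_ifs
  · simp only [ann, Fin.snoc_swap_last_castSucc_eq_update_comp, hreindex, mul_sum, sum_mul]
    rw [sum_comm]
    exact sum_congr rfl fun _ _ => sum_congr rfl fun _ _ => by ring
  · simp

theorem ann_cre_sub_mul_cre_ann [∀ n, DecidableEq (F n)] (q : ℂ)
    (hρ_one : ∀ n g, ρ n 1 g = g) (hρ_mul : ∀ n σ τ g, ρ n (σ * τ) g = ρ n σ (ρ n τ g))
    (hdiag : ∀ n (f h : F n), ∑ g, ω n f g * starRingEnd ℂ (ω n h g) = if f = h then 1 else 0)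
    (hoff : ∀ m (k : Fin (m + 1)) (f h : F (m + 1)),
      ∑ g, ω (m + 1) f g *
          starRingEnd ℂ (ω (m + 1) h (ρ (m + 2) (swap (Fin.last (m + 1)) k.castSucc) g))
        = q * ∑ p, starRingEnd ℂ (ω m p (ρ (m + 1) (swap (Fin.last m) k) f)) *
          ω m p (ρ (m + 1) (swap (Fin.last m) k) h))
    {φ : CVec F J} (hφ : IsSymmVec ρ φ) (j₁ j₂ : J) (n : ℕ) (f : F n) (c : Fin n → J) :
    ann ω j₁ (cre ρ ω j₂ φ) n f c - q * cre ρ ω j₂ (ann ω j₁ φ) n f c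
      = (if j₁ = j₂ then 1 else 0) * φ n f c := by
  rw [ann_cre_apply, Fin.sum_univ_castSucc, add_sub_right_comm]
  convert zero_add ((if j₁ = j₂ then 1 else 0) * φ n f c) using 2
  · rw [sub_eq_zero]
    cases n with
    | zero => simp [cre]
    | succ m =>
      rw [cre_ann_apply hρ_one hρ_mul hφ, mul_sum]
      refine sum_congr rfl fun k _ => ?_
      simp only [Fin.snoc_castSucc, Fin.snoc_apply_swap_last_castSucc, hoff, mul_ite, mul_zero,
        mul_sum, sum_mul, mul_assoc]
  · simp only [swap_self, refl_apply, Fin.snoc_last, Fin.snoc_castSucc]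
    split_ifs
    · simp [← Perm.one_def, hρ_one, hdiag]
    · simp

end FockSpace

section Weight

variable {q : ℝ} {n m : ℕ}

def qWeight (q : ℝ) (n d : ℕ) : ℝ := √(q ^ (n - d) * (1 - q) ^ d)

lemma qWeight_mul_self (hq0 : 0 ≤ q) (hq1 : q ≤ 1) (d : ℕ) :
    qWeight q n d * qWeight q n d = q ^ (n - d) * (1 - q) ^ d :=
  Real.mul_self_sqrt (mul_nonneg (pow_nonneg hq0 _) (pow_nonneg (sub_nonneg.2 hq1) _))

lemma sum_qWeight_mul_self (hq0 : 0 ≤ q) (hq1 : q ≤ 1) (n : ℕ) :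
    ∑ S : Finset (Fin n), qWeight q n #S * qWeight q n #S = 1 := by
  calc ∑ S : Finset (Fin n), qWeight q n #S * qWeight q n #S
      = ∑ S : Finset (Fin n), (1 - q) ^ #S * q ^ (n - #S) :=
        sum_congr rfl fun _ _ => by rw [qWeight_mul_self hq0 hq1, mul_comm]
    _ = 1 := by rw [Fin.sum_pow_mul_eq_add_pow, sub_add_cancel, one_pow]

lemma qWeight_succ (hq0 : 0 ≤ q) {d : ℕ} (hd : d ≤ m) :
    qWeight q (m + 1) d = √q * qWeight q m d := by
  rw [qWeight, qWeight, ← Real.sqrt_mul hq0, Nat.sub_add_comm hd, pow_succ]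
  ring_nf

end Weight

namespace DGraph

variable {n m : ℕ}

lemma apply_self (g : DGraph n) (x : Fin n) : g.1 x x = false := by
  cases h : g.1 x x
  · rfl
  · simpa [h] using g.2 x x h

lemma rhoD_one (g : DGraph n) : rhoD n 1 g = g := rfl

lemma rhoD_mul (σ τ : Equiv.Perm (Fin n)) (g : DGraph n) :
    rhoD n (σ * τ) g = rhoD n σ (rhoD n τ g) := rfl

lemma rhoD_swap_apply (a b : Fin n) (g : DGraph n) (x y : Fin n) :
    (rhoD n (swap a b) g).1 x y = g.1 (swap a b x) (swap a b y) := by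
  simp [rhoD, symm_swap]

def outNbrs (g : DGraph n) (x : Fin n) : Finset (Fin n) := {y | g.1 x y = true}

def IsSource (g : DGraph n) (x : Fin n) : Prop := ∀ u, g.1 u x = false

lemma card_outNbrs_le (g : DGraph (m + 1)) (k : Fin (m + 1)) : #(g.outNbrs k) ≤ m := by
  have : g.outNbrs k ⊆ univ.erase k := fun x hx => by
    simp only [outNbrs, mem_filter, mem_univ, true_and] at hx
    simpa using fun h : x = k => by simp [h, apply_self] at hx
  simpa using card_le_card this

def restrict (g : DGraph (n + 1)) : DGraph n :=
  ⟨fun u v => g.1 u.castSucc v.castSucc, fun _ _ h => g.2 _ _ h⟩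

def IsExtension (f : DGraph n) (g : DGraph (n + 1)) : Prop :=
  (∀ u v : Fin n, g.1 u.castSucc v.castSucc = f.1 u v) ∧
    ∀ u : Fin n, g.1 u.castSucc (Fin.last n) = false

lemma isExtension_iff {f : DGraph n} {g : DGraph (n + 1)} :
    IsExtension f g ↔ g.restrict = f ∧ IsSource g (Fin.last n) := by
  simp [IsExtension, IsSource, restrict, Subtype.ext_iff, funext_iff, Fin.forall_fin_succ',
    apply_self]

def extend (f : DGraph n) (S : Finset (Fin n)) : DGraph (n + 1) :=
  ⟨Fin.lastCases (Fin.lastCases false fun v => decide (v ∈ S))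
      (fun u => Fin.lastCases false fun v => f.1 u v), by
    intro u v h
    induction u using Fin.lastCases <;> induction v using Fin.lastCases <;> simp at h ⊢
    exact f.2 _ _ h⟩

@[simp] lemma extend_castSucc_castSucc (f : DGraph n) (S : Finset (Fin n)) (u v : Fin n) :
    (f.extend S).1 u.castSucc v.castSucc = f.1 u v := by
  simp [extend]

@[simp] lemma extend_last_castSucc (f : DGraph n) (S : Finset (Fin n)) (v : Fin n) :
    (f.extend S).1 (Fin.last n) v.castSucc = decide (v ∈ S) := by
  simp [extend]

@[simp] lemma extend_last_last (f : DGraph n) (S : Finset (Fin n)) :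
    (f.extend S).1 (Fin.last n) (Fin.last n) = false := by
  simp [extend]

@[simp] lemma extend_castSucc_last (f : DGraph n) (S : Finset (Fin n)) (u : Fin n) :
    (f.extend S).1 u.castSucc (Fin.last n) = false := by
  simp [extend]

lemma isExtension_extend (f : DGraph n) (S : Finset (Fin n)) : IsExtension f (f.extend S) := by
  simp [IsExtension]

lemma outDeg_extend (f : DGraph n) (S : Finset (Fin n)) : outDeg (f.extend S) = #S := by
  simp [outDeg]

lemma extend_injective (f : DGraph n) : Function.Injective f.extend := fun S T h => by
  ext v
  simpa using congrArg (fun g : DGraph (n + 1) => g.1 (Fin.last n) v.castSucc) h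

lemma IsExtension.eq_extend {f : DGraph n} {g : DGraph (n + 1)} (hg : IsExtension f g) :
    g = f.extend {v | g.1 (Fin.last n) v.castSucc = true} := by
  refine Subtype.ext (funext fun u => funext fun v => ?_)
  induction u using Fin.lastCases <;> induction v using Fin.lastCases <;>
    simp [apply_self, hg.1, hg.2]

lemma IsExtension.unique {f h : DGraph n} {g : DGraph (n + 1)} (hf : IsExtension f g)
    (hh : IsExtension h g) : f = h := by
  rw [isExtension_iff] at hf hh
  rw [← hf.1, hh.1]

lemma isSource_rhoD_iff (σ : Equiv.Perm (Fin n)) (g : DGraph n) (x : Fin n) :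
    (rhoD n σ g).IsSource x ↔ g.IsSource (σ.symm x) :=
  (σ.symm.surjective.forall (p := fun u => g.1 u (σ.symm x) = false)).symm

def AgreeAwayFromSource (k : Fin n) (f h : DGraph n) : Prop :=
  f.IsSource k ∧ h.IsSource k ∧ ∀ u ≠ k, ∀ v ≠ k, f.1 u v = h.1 u v

section SwapLast

variable {k : Fin (m + 1)}

lemma restrict_rhoD_swap_eq_iff {f h : DGraph (m + 1)} :
    (rhoD (m + 1) (swap (Fin.last m) k) f).restrict
        = (rhoD (m + 1) (swap (Fin.last m) k) h).restrict
      ↔ ∀ u ≠ k, ∀ v ≠ k, f.1 u v = h.1 u v := by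
  simp only [restrict, Subtype.ext_iff, funext_iff, rhoD_swap_apply]
  exact (forall_congr' fun _ => Fin.forall_swap_last_castSucc_iff).trans
    (Fin.forall_swap_last_castSucc_iff (P := fun u => ∀ v ≠ k, f.1 u v = h.1 u v))

lemma isExtension_rhoD_swap_iff {p : DGraph m} {f : DGraph (m + 1)} :
    IsExtension p (rhoD (m + 1) (swap (Fin.last m) k) f)
      ↔ (rhoD (m + 1) (swap (Fin.last m) k) f).restrict = p ∧ f.IsSource k := by
  rw [isExtension_iff, isSource_rhoD_iff, symm_swap, swap_apply_left]

lemma isExtension_rhoD_swap_and_iff {p : DGraph m} {f h : DGraph (m + 1)} :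
    IsExtension p (rhoD (m + 1) (swap (Fin.last m) k) f) ∧
        IsExtension p (rhoD (m + 1) (swap (Fin.last m) k) h)
      ↔ (rhoD (m + 1) (swap (Fin.last m) k) f).restrict = p ∧ AgreeAwayFromSource k f h := by
  rw [isExtension_rhoD_swap_iff, isExtension_rhoD_swap_iff, AgreeAwayFromSource,
    ← restrict_rhoD_swap_eq_iff]
  constructor
  · rintro ⟨⟨rfl, hf⟩, heq, hh⟩
    exact ⟨rfl, hf, hh, heq.symm⟩
  · rintro ⟨rfl, hf, hh, heq⟩
    exact ⟨⟨rfl, hf⟩, heq.symm, hh⟩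

lemma outDeg_rhoD_swap (f : DGraph (m + 1)) :
    outDeg (rhoD (m + 1) (swap (Fin.last m) k) f) = #(f.outNbrs k) := by
  simp only [outDeg, outNbrs, rhoD_swap_apply, swap_apply_left]
  exact Fin.card_filter_swap_last_castSucc (P := fun x => f.1 k x = true) (by simp [apply_self])

variable {f h : DGraph (m + 1)} {S : Finset (Fin (m + 1))}

lemma rhoD_swap_extend_castSucc_castSucc (u v : Fin (m + 1)) :
    (rhoD (m + 2) (swap (Fin.last (m + 1)) k.castSucc) (f.extend S)).1 u.castSucc v.castSucc
      = if u = k then (if v = k then false else decide (v ∈ S))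
        else if v = k then false else f.1 u v := by
  rw [rhoD_swap_apply, Fin.swap_last_castSucc_apply_castSucc,
    Fin.swap_last_castSucc_apply_castSucc]
  split_ifs <;> simp

lemma rhoD_swap_extend_castSucc_last (u : Fin (m + 1)) :
    (rhoD (m + 2) (swap (Fin.last (m + 1)) k.castSucc) (f.extend S)).1 u.castSucc (Fin.last (m + 1))
      = if u = k then decide (k ∈ S) else f.1 u k := by
  rw [rhoD_swap_apply, Fin.swap_last_castSucc_apply_castSucc, swap_apply_left]
  split_ifs <;> simp

lemma rhoD_swap_extend_last_castSucc (v : Fin (m + 1)) :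
    (rhoD (m + 2) (swap (Fin.last (m + 1)) k.castSucc) (f.extend S)).1 (Fin.last (m + 1)) v.castSucc
      = f.1 k v := by
  rw [rhoD_swap_apply, Fin.swap_last_castSucc_apply_castSucc, swap_apply_left]
  split_ifs with hv <;> simp [hv, apply_self]

lemma isExtension_rhoD_swap_extend_iff :
    IsExtension h (rhoD (m + 2) (swap (Fin.last (m + 1)) k.castSucc) (f.extend S))
      ↔ h.outNbrs k = S ∧ AgreeAwayFromSource k f h := by
  simp only [IsExtension, rhoD_swap_extend_castSucc_castSucc, rhoD_swap_extend_castSucc_last]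
  constructor
  · rintro ⟨hmid, hlast⟩
    have hkS : k ∉ S := by simpa using hlast k
    refine ⟨?_, fun u => ?_, fun u => ?_, fun u hu v hv => by simpa [hu, hv] using hmid u v⟩
    · ext v
      by_cases hv : v = k
      · rw [hv]
        simp [outNbrs, apply_self, hkS]
      · have hkv := hmid k v
        simp only [if_neg hv] at hkv
        simp [outNbrs, ← hkv]
    · by_cases hu : u = k
      · rw [hu, apply_self]
      · simpa [hu] using hlast u
    · by_cases hu : u = k
      · rw [hu, apply_self]
      · simpa [hu] using (hmid u k).symm
  · rintro ⟨rfl, hf, hh, hagree⟩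
    refine ⟨fun u v => ?_, fun u => ?_⟩
    · split_ifs with hu hv hv
      · rw [hu, hv, apply_self]
      · simp [outNbrs, hu]
      · rw [hv, hh u]
      · exact hagree u hu v hv
    · split_ifs
      · simp [outNbrs, apply_self]
      · exact hf u

lemma outDeg_rhoD_swap_extend :
    outDeg (rhoD (m + 2) (swap (Fin.last (m + 1)) k.castSucc) (f.extend S)) = #(f.outNbrs k) := by
  simp only [outDeg, rhoD_swap_extend_last_castSucc]
  rfl

end SwapLast

variable {q : ℝ}

lemma omegaD_of_isExtension {f : DGraph n} {g : DGraph (n + 1)} (hg : IsExtension f g) :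
    omegaD q n f g = qWeight q n (outDeg g) :=
  if_pos hg

lemma omegaD_of_not_isExtension {f : DGraph n} {g : DGraph (n + 1)} (hg : ¬ IsExtension f g) :
    omegaD q n f g = 0 :=
  if_neg hg

lemma conj_omegaD (f : DGraph n) (g : DGraph (n + 1)) :
    starRingEnd ℂ (omegaD q n f g) = omegaD q n f g := by
  by_cases hg : IsExtension f g
  · rw [omegaD_of_isExtension hg, Complex.conj_ofReal]
  · rw [omegaD_of_not_isExtension hg, map_zero]

lemma omegaD_extend (f : DGraph n) (S : Finset (Fin n)) :
    omegaD q n f (f.extend S) = qWeight q n #S := by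
  rw [omegaD_of_isExtension (isExtension_extend f S), outDeg_extend]

lemma sum_omegaD_mul_eq_sum_extend (f : DGraph n) (G : DGraph (n + 1) → ℂ) :
    ∑ g, omegaD q n f g * G g = ∑ S, (qWeight q n #S : ℂ) * G (f.extend S) := by
  refine (Fintype.sum_of_injective _ (extend_injective f) _ _ (fun g hg => ?_)
    (fun S => by rw [omegaD_extend])).symm
  rw [omegaD_of_not_isExtension fun hfg => hg ⟨_, hfg.eq_extend.symm⟩, zero_mul]

lemma sum_omegaD_mul_omegaD (hq0 : 0 ≤ q) (hq1 : q ≤ 1) (f h : DGraph n) :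
    ∑ g, omegaD q n f g * omegaD q n h g = if f = h then 1 else 0 := by
  rw [sum_omegaD_mul_eq_sum_extend]
  split_ifs with hfh
  · subst hfh
    simp only [omegaD_extend]
    exact_mod_cast sum_qWeight_mul_self hq0 hq1 n
  · refine sum_eq_zero fun S _ => ?_
    rw [omegaD_of_not_isExtension fun hh => hfh ((isExtension_extend f S).unique hh), mul_zero]

lemma omegaD_mul_omegaD_eq_zero {n₁ n₂ : ℕ} {f₁ : DGraph n₁} {g₁ : DGraph (n₁ + 1)}
    {f₂ : DGraph n₂} {g₂ : DGraph (n₂ + 1)} (h : ¬ (IsExtension f₁ g₁ ∧ IsExtension f₂ g₂)) :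
    omegaD q n₁ f₁ g₁ * omegaD q n₂ f₂ g₂ = 0 := by
  by_cases h₁ : IsExtension f₁ g₁
  · rw [omegaD_of_not_isExtension fun h₂ => h ⟨h₁, h₂⟩, mul_zero]
  · rw [omegaD_of_not_isExtension h₁, zero_mul]

open Classical in
lemma sum_omegaD_mul_omegaD_rhoD_swap_eq_ite (k : Fin (m + 1)) (f h : DGraph (m + 1)) :
    ∑ g, omegaD q (m + 1) f g *
        omegaD q (m + 1) h (rhoD (m + 2) (swap (Fin.last (m + 1)) k.castSucc) g)
      = if AgreeAwayFromSource k f h then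
          (qWeight q (m + 1) #(h.outNbrs k) * qWeight q (m + 1) #(f.outNbrs k) : ℂ) else 0 := by
  rw [sum_omegaD_mul_eq_sum_extend, Fintype.sum_eq_single (h.outNbrs k) fun S hS => ?_]
  · split_ifs with hC
    · rw [omegaD_of_isExtension (isExtension_rhoD_swap_extend_iff.2 ⟨rfl, hC⟩),
        outDeg_rhoD_swap_extend]
    · rw [omegaD_of_not_isExtension fun hh => hC (isExtension_rhoD_swap_extend_iff.1 hh).2,
        mul_zero]
  · rw [omegaD_of_not_isExtension fun hh => hS (isExtension_rhoD_swap_extend_iff.1 hh).1.symm,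
      mul_zero]

open Classical in
lemma sum_omegaD_rhoD_swap_mul_omegaD_rhoD_swap_eq_ite (k : Fin (m + 1)) (f h : DGraph (m + 1)) :
    ∑ p, omegaD q m p (rhoD (m + 1) (swap (Fin.last m) k) f) *
        omegaD q m p (rhoD (m + 1) (swap (Fin.last m) k) h)
      = if AgreeAwayFromSource k f h then
          (qWeight q m #(f.outNbrs k) * qWeight q m #(h.outNbrs k) : ℂ) else 0 := by
  rw [Fintype.sum_eq_single (rhoD (m + 1) (swap (Fin.last m) k) f).restrict fun p hp =>
    omegaD_mul_omegaD_eq_zero fun hext => hp (isExtension_rhoD_swap_and_iff.1 hext).1.symm]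
  split_ifs with hC
  · obtain ⟨hf, hh⟩ := isExtension_rhoD_swap_and_iff.2 ⟨rfl, hC⟩
    rw [omegaD_of_isExtension hf, omegaD_of_isExtension hh, outDeg_rhoD_swap, outDeg_rhoD_swap]
  · exact omegaD_mul_omegaD_eq_zero fun hext => hC (isExtension_rhoD_swap_and_iff.1 hext).2

lemma sum_omegaD_mul_omegaD_rhoD_swap (hq0 : 0 ≤ q) (k : Fin (m + 1)) (f h : DGraph (m + 1)) :
    ∑ g, omegaD q (m + 1) f g *
        omegaD q (m + 1) h (rhoD (m + 2) (swap (Fin.last (m + 1)) k.castSucc) g)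
      = q * ∑ p, omegaD q m p (rhoD (m + 1) (swap (Fin.last m) k) f) *
          omegaD q m p (rhoD (m + 1) (swap (Fin.last m) k) h) := by
  rw [sum_omegaD_mul_omegaD_rhoD_swap_eq_ite, sum_omegaD_rhoD_swap_mul_omegaD_rhoD_swap_eq_ite]
  split_ifs
  · rw [qWeight_succ hq0 (card_outNbrs_le h k), qWeight_succ hq0 (card_outNbrs_le f k)]
    have hsqrt : (√q : ℂ) * √q = q := by exact_mod_cast Real.mul_self_sqrt hq0
    push_cast
    linear_combination (qWeight q m #(f.outNbrs k) * qWeight q m #(h.outNbrs k) : ℂ) * hsqrt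
  · rw [mul_zero]

end DGraph

/-- On the combinatorial Fock space `(D, ω^{D,q})` of simple directed graphs
with the `q`-weight, `0 ≤ q ≤ 1`, the `q`-commutation relations hold:
`a(h₁)a*(h₂) − q·a*(h₂)a(h₁) = ⟨h₁,h₂⟩·1` (stated on basis vectors `h₁ = e_{j₁}`,
`h₂ = e_{j₂}`, so `⟨h₁,h₂⟩ = δ_{j₁ j₂}`). -/
theorem digraphs_q_commutation {J : Type} [DecidableEq J]
    (q : ℝ) (hq0 : 0 ≤ q) (hq1 : q ≤ 1)
    (φ : CVec DGraph J) (hφ : IsSymmVec rhoD φ) (j₁ j₂ : J)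
    (n : ℕ) (f : DGraph n) (c : Fin n → J) :
    ann (omegaD q) j₁ (cre rhoD (omegaD q) j₂ φ) n f c
      - (q : ℂ) * cre rhoD (omegaD q) j₂ (ann (omegaD q) j₁ φ) n f c
      = (if j₁ = j₂ then (1 : ℂ) else 0) * φ n f c := by
  refine ann_cre_sub_mul_cre_ann (q : ℂ) (fun _ => DGraph.rhoD_one) (fun _ => DGraph.rhoD_mul)
    ?_ ?_ hφ j₁ j₂ n f c
  · simpa only [DGraph.conj_omegaD] using
      fun n => DGraph.sum_omegaD_mul_omegaD hq0 hq1 (n := n)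
  · simpa only [DGraph.conj_omegaD] using
      fun m => DGraph.sum_omegaD_mul_omegaD_rhoD_swap hq0 (m := m)

end
end
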